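/- arXiv:1403.5873 — 2 statements merged into one kernel-verified Lean document; each statement's English description precedes it below -/
import Mathlib

section
/- A regular category C is a Mal'tsev category if and only if every square of type (1) in C is a regular pushout, i.e. the comparison morphism ⟨g, c⟩: C → D×_B A to the pullback of d and f is a regular epimorphism. -/
open CategoryTheory CategoryTheory.Limits

universe v u

namespace Paper

variable {𝒞 : Type u} [Category.{v} 𝒞]

/-- `f` is a regular epimorphism: it is a coequaliser of some pair of morphisms. -/
def IsRegEpi {X Y : 𝒞} (f : X ⟶ Y) : Prop :=
  ∃ (Z : 𝒞) (a b : Z ⟶ X), a ≫ f = b ≫ f ∧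
    ∀ {T : 𝒞} (h : X ⟶ T), a ≫ h = b ≫ h → ∃! u : Y ⟶ T, f ≫ u = h

/-- Regular epimorphisms are pullback-stable. -/
def RegEpisStable (𝒞 : Type u) [Category.{v} 𝒞] : Prop :=
  ∀ {P X Y Z : 𝒞} (p₁ : P ⟶ X) (p₂ : P ⟶ Y) (f : X ⟶ Z) (g : Y ⟶ Z),
    IsPullback p₁ p₂ f g → IsRegEpi g → IsRegEpi p₁

/-- Every kernel pair admits a coequaliser. -/
def KernelPairsHaveCoequalisers (𝒞 : Type u) [Category.{v} 𝒞] : Prop :=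
  ∀ {R X Y : 𝒞} (f : X ⟶ Y) (a b : R ⟶ X), IsKernelPair f a b →
    ∃ (Q : 𝒞) (q : X ⟶ Q), a ≫ q = b ≫ q ∧
      ∀ {T : 𝒞} (h : X ⟶ T), a ≫ h = b ≫ h → ∃! u : Q ⟶ T, q ≫ u = h

/-- A relation from `X` to `Y`: a jointly monomorphic span. -/
structure Rel (𝒞 : Type u) [Category.{v} 𝒞] (X Y : 𝒞) where
  R : 𝒞
  p1 : R ⟶ X
  p2 : R ⟶ Y
  jm : ∀ {Z : 𝒞} (a b : Z ⟶ R), a ≫ p1 = b ≫ p1 → a ≫ p2 = b ≫ p2 → a = b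

variable {X Y Z : 𝒞}

/-- `ρ` is a subrelation of `σ`. -/
def Rel.le (ρ σ : Rel 𝒞 X Y) : Prop :=
  ∃ j : ρ.R ⟶ σ.R, j ≫ σ.p1 = ρ.p1 ∧ j ≫ σ.p2 = ρ.p2

/-- `ρ` and `σ` are the same relation (isomorphic as subobjects of `X × Y`). -/
def Rel.equiv (ρ σ : Rel 𝒞 X Y) : Prop := ρ.le σ ∧ σ.le ρ

/-- The opposite relation. -/
def Rel.op (ρ : Rel 𝒞 X Y) : Rel 𝒞 Y X :=
  ⟨ρ.R, ρ.p2, ρ.p1, fun a b h2 h1 => ρ.jm a b h1 h2⟩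

/-- A morphism viewed as a relation. -/
def homRel (f : X ⟶ Y) : Rel 𝒞 X Y :=
  ⟨X, 𝟙 X, f, fun a b h _ => by simpa using h⟩

/-- The discrete (diagonal) relation on `X`. -/
def diagRel (X : 𝒞) : Rel 𝒞 X X := homRel (𝟙 X)

/-- The kernel pair `Eq(f)` of `f` as a relation on `X`. -/
noncomputable def kerPairRel [HasPullbacks 𝒞] (f : X ⟶ Y) : Rel 𝒞 X X :=
  ⟨pullback f f, pullback.fst f f, pullback.snd f f,
    fun a b h1 h2 => pullback.hom_ext h1 h2⟩

/-- `τ` is the composite `σρ` (first `ρ` from `X` to `Y`, then `σ` from `Y` to `Z`),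
i.e. the (regular epi, jointly mono) factorisation of the span induced on the
pullback of `ρ.p2` and `σ.p1`. -/
def IsRelComp [HasPullbacks 𝒞] (σ : Rel 𝒞 Y Z) (ρ : Rel 𝒞 X Y) (τ : Rel 𝒞 X Z) : Prop :=
  ∃ e : pullback ρ.p2 σ.p1 ⟶ τ.R, IsRegEpi e ∧
    e ≫ τ.p1 = pullback.fst ρ.p2 σ.p1 ≫ ρ.p1 ∧
    e ≫ τ.p2 = pullback.snd ρ.p2 σ.p1 ≫ σ.p2

def Rel.IsReflexive (ρ : Rel 𝒞 X X) : Prop :=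
  ∃ r : X ⟶ ρ.R, r ≫ ρ.p1 = 𝟙 X ∧ r ≫ ρ.p2 = 𝟙 X

def Rel.IsSymmetric (ρ : Rel 𝒞 X X) : Prop :=
  ∃ s : ρ.R ⟶ ρ.R, s ≫ ρ.p1 = ρ.p2 ∧ s ≫ ρ.p2 = ρ.p1

def Rel.IsTransitive [HasPullbacks 𝒞] (ρ : Rel 𝒞 X X) : Prop :=
  ∃ t : pullback ρ.p2 ρ.p1 ⟶ ρ.R,
    t ≫ ρ.p1 = pullback.fst ρ.p2 ρ.p1 ≫ ρ.p1 ∧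
    t ≫ ρ.p2 = pullback.snd ρ.p2 ρ.p1 ≫ ρ.p2

def Rel.IsEquivalence [HasPullbacks 𝒞] (ρ : Rel 𝒞 X X) : Prop :=
  ρ.IsReflexive ∧ ρ.IsSymmetric ∧ ρ.IsTransitive

/-- A finitely complete category is a Mal'tsev category when every reflexive
relation in it is an equivalence relation. -/
def IsMaltsev (𝒞 : Type u) [Category.{v} 𝒞] [HasPullbacks 𝒞] : Prop :=
  ∀ {X : 𝒞} (ρ : Rel 𝒞 X X), ρ.IsReflexive → ρ.IsEquivalence

/-- A square of type (1): split epimorphisms `f` (with section `s`) and `g`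
(with section `t`), regular epimorphisms `c` and `d`, with `f·c = d·g` and
`s·d = c·t`. -/
structure IsSquare1 {A B E D : 𝒞} (f : A ⟶ B) (s : B ⟶ A) (g : E ⟶ D) (t : D ⟶ E)
    (c : E ⟶ A) (d : D ⟶ B) : Prop where
  sec_f : s ≫ f = 𝟙 B
  sec_g : t ≫ g = 𝟙 D
  regepi_c : IsRegEpi c
  regepi_d : IsRegEpi d
  comm1 : c ≫ f = g ≫ d
  comm2 : d ≫ s = t ≫ c

/-- `N` is an ideal of morphisms. -/
def IsIdeal (N : MorphismProperty 𝒞) : Prop :=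
  ∀ {X Y Z : 𝒞} (f : X ⟶ Y) (g : Y ⟶ Z), N f ∨ N g → N (f ≫ g)

/-- `n` is an `N`-kernel of `f`. -/
def IsNKernel (N : MorphismProperty 𝒞) {X Y K : 𝒞} (f : X ⟶ Y) (n : K ⟶ X) : Prop :=
  N (n ≫ f) ∧ ∀ {Z : 𝒞} (m : Z ⟶ X), N (m ≫ f) → ∃! u : Z ⟶ K, u ≫ n = m

/-- Every morphism admits an `N`-kernel. -/
def HasNKernels (N : MorphismProperty 𝒞) : Prop :=
  ∀ {X Y : 𝒞} (f : X ⟶ Y), ∃ (K : 𝒞) (n : K ⟶ X), IsNKernel N f n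

/-- `τ` is the largest star subrelation `ρ*` of the relation `ρ`. -/
def IsLargestStarSub (N : MorphismProperty 𝒞) (ρ τ : Rel 𝒞 X Y) : Prop :=
  τ.le ρ ∧ N τ.p1 ∧ ∀ σ : Rel 𝒞 X Y, σ.le ρ → N σ.p1 → σ.le τ

/-- `(s1, s2)` is the star-kernel of `f`: the universal star coequalised by `f`. -/
def IsStarKernel (N : MorphismProperty 𝒞) {S X Y : 𝒞} (f : X ⟶ Y) (s1 s2 : S ⟶ X) : Prop :=
  N s1 ∧ s1 ≫ f = s2 ≫ f ∧
    ∀ {T : 𝒞} (t1 t2 : T ⟶ X), N t1 → t1 ≫ f = t2 ≫ f →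
      ∃! u : T ⟶ S, u ≫ s1 = t1 ∧ u ≫ s2 = t2

/-- `(ν1, ν2)` is the star of the pullback relation of `(g, δ)`: the universal
pair with `ν1 ∈ N` and `δ·ν1 = g·ν2`. -/
def IsStarPullbackRel (N : MorphismProperty 𝒞) {W E D P : 𝒞} (δ : W ⟶ D) (g : E ⟶ D)
    (ν1 : P ⟶ W) (ν2 : P ⟶ E) : Prop :=
  N ν1 ∧ ν1 ≫ δ = ν2 ≫ g ∧
    ∀ {T : 𝒞} (t1 : T ⟶ W) (t2 : T ⟶ E), N t1 → t1 ≫ δ = t2 ≫ g →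
      ∃! u : T ⟶ P, u ≫ ν1 = t1 ∧ u ≫ ν2 = t2

/-- `f` is a coequaliser of `(s1, s2)`. -/
def IsCoeqOf {S X Y : 𝒞} (f : X ⟶ Y) (s1 s2 : S ⟶ X) : Prop :=
  s1 ≫ f = s2 ≫ f ∧ ∀ {T : 𝒞} (h : X ⟶ T), s1 ≫ h = s2 ≫ h → ∃! u : Y ⟶ T, f ≫ u = h

/-- Star-regularity: every regular epimorphism is a coequaliser of a star. -/
def StarRegular (𝒞 : Type u) [Category.{v} 𝒞] (N : MorphismProperty 𝒞) : Prop :=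
  ∀ {X Y : 𝒞} (f : X ⟶ Y), IsRegEpi f →
    ∃ (S : 𝒞) (s1 s2 : S ⟶ X), N s1 ∧ IsCoeqOf f s1 s2

/-- `f` is saturating: the induced morphism between the `N`-kernels of the
identities is a regular epimorphism. -/
def Saturating (N : MorphismProperty 𝒞) {X Y : 𝒞} (f : X ⟶ Y) : Prop :=
  ∀ {KX KY : 𝒞} (nX : KX ⟶ X) (nY : KY ⟶ Y), IsNKernel N (𝟙 X) nX → IsNKernel N (𝟙 Y) nY →
    ∀ u : KX ⟶ KY, u ≫ nY = nX ≫ f → IsRegEpi u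

/-- `X` is an `N`-trivial object. -/
def NTrivial (N : MorphismProperty 𝒞) (X : 𝒞) : Prop := N (𝟙 X)

/-- The multi-pointed category has enough trivial objects: `N` is a closed ideal and
`N`-trivial objects are closed under subobjects and squares. -/
def EnoughTrivialObjects [HasBinaryProducts 𝒞] (N : MorphismProperty 𝒞) : Prop :=
  (∀ {X Y : 𝒞} (f : X ⟶ Y), N f → ∃ (T : 𝒞) (p : X ⟶ T) (q : T ⟶ Y),
      NTrivial N T ∧ p ≫ q = f) ∧
  (∀ {S X : 𝒞} (m : S ⟶ X), Mono m → NTrivial N X → NTrivial N S) ∧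
  (∀ X : 𝒞, NTrivial N X → NTrivial N (X ⨯ X))

/-- A square of type (1) is a star-regular pushout when `(c g°)* = f° d*`. -/
def IsStarRegularPushout [HasPullbacks 𝒞] (N : MorphismProperty 𝒞) {A B E D : 𝒞}
    (f : A ⟶ B) (g : E ⟶ D) (c : E ⟶ A) (d : D ⟶ B) : Prop :=
  ∀ (ρ τ μ : Rel 𝒞 D A) (ds : Rel 𝒞 D B),
    IsRelComp (homRel c) (Rel.op (homRel g)) ρ → IsLargestStarSub N ρ τ →
    IsLargestStarSub N (homRel d) ds → IsRelComp (Rel.op (homRel f)) ds μ →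
    τ.equiv μ

/-- 2-star-permutability: `Eq(f) Eq(g)* = Eq(g) Eq(f)*` for all regular
epimorphisms `f`, `g` with the same domain. -/
def TwoStarPermutable (𝒞 : Type u) [Category.{v} 𝒞] [HasPullbacks 𝒞]
    (N : MorphismProperty 𝒞) : Prop :=
  ∀ {X Y Z : 𝒞} (f : X ⟶ Y) (g : X ⟶ Z), IsRegEpi f → IsRegEpi g →
    ∀ (sf sg : Rel 𝒞 X X), IsLargestStarSub N (kerPairRel f) sf →
      IsLargestStarSub N (kerPairRel g) sg →
    ∀ (τ₁ τ₂ : Rel 𝒞 X X), IsRelComp (kerPairRel f) sg τ₁ →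
      IsRelComp (kerPairRel g) sf τ₂ → τ₁.equiv τ₂

section Pointed

variable [HasZeroMorphisms 𝒞]

/-- `k` is a kernel of `f`. -/
def IsKernelOf {K X Y : 𝒞} (k : K ⟶ X) (f : X ⟶ Y) : Prop :=
  k ≫ f = 0 ∧ ∀ {Z : 𝒞} (m : Z ⟶ X), m ≫ f = 0 → ∃! u : Z ⟶ K, u ≫ k = m

/-- `f` is a cokernel of `k`. -/
def IsCokernelOf {X Y K : 𝒞} (f : X ⟶ Y) (k : K ⟶ X) : Prop :=
  k ≫ f = 0 ∧ ∀ {T : 𝒞} (h : X ⟶ T), k ≫ h = 0 → ∃! u : Y ⟶ T, f ≫ u = h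

/-- Short exact sequence `K → X ↠ Y`. -/
def IsShortExact {K X Y : 𝒞} (k : K ⟶ X) (f : X ⟶ Y) : Prop :=
  IsKernelOf k f ∧ IsCokernelOf f k

/-- Subtractivity: every reflexive, left punctual relation is right punctual. -/
def IsSubtractive (𝒞 : Type u) [Category.{v} 𝒞] [HasZeroMorphisms 𝒞] : Prop :=
  ∀ {X : 𝒞} (ρ : Rel 𝒞 X X), ρ.IsReflexive →
    (∃ l : X ⟶ ρ.R, l ≫ ρ.p1 = 𝟙 X ∧ l ≫ ρ.p2 = 0) →
    (∃ r : X ⟶ ρ.R, r ≫ ρ.p1 = 0 ∧ r ≫ ρ.p2 = 𝟙 X)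

end Pointed

/-!
In a Mal'tsev category every relation is difunctional. A subobject of `D ×_B A` through which
`⟨g, c⟩` factors is a relation from `D` to `A` containing every `(g e, c e)`. For `(x, a)` in the
pullback with `a = c e` (which holds after covering the pullback by its pullback along `c`),
difunctionality applied to `(x, s f a) = (g t x, c t x)`, `(g e, s f a) = (g t g e, c t g e)`
and `(g e, a)` puts `(x, a)` in the subobject, so it is everything: `⟨g, c⟩` is an extremal,
hence regular, epimorphism.

Conversely, squares of type (1) with split `c` and `d` say that a subobject of a pullback of split
epimorphisms containing both canonical sections is the whole pullback. For a reflexive relation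
`ρ`, the subobject of composable pairs whose composite lies in `ρ` is such a subobject, so `ρ` is
transitive. Transitivity of all reflexive relations gives difunctionality of every relation `ρ`
(apply it to the reflexive relation `u ~ v ⟺ (p₁ u, p₂ v) ∈ ρ` on `ρ.R`), and a difunctional
reflexive relation is symmetric.
-/

attribute [local simp] pullback.lift_fst pullback.lift_fst_assoc pullback.lift_snd
  pullback.lift_snd_assoc prod.lift_fst prod.lift_fst_assoc prod.lift_snd prod.lift_snd_assoc

theorem isRegEpi_iff_isRegularEpi {X Y : 𝒞} (f : X ⟶ Y) : IsRegEpi f ↔ IsRegularEpi f := by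
  constructor
  · rintro ⟨W, a, b, w, hf⟩
    exact isRegularEpi_of_regularEpi
      { W, left := a, right := b, w
        isColimit := Cofork.IsColimit.ofExistsUnique fun s => hf s.π s.condition }
  · rintro ⟨⟨hf⟩⟩
    exact ⟨hf.W, hf.left, hf.right, hf.w,
      fun h hh => Cofork.IsColimit.existsUnique hf.isColimit h hh⟩

theorem isRegEpi_of_comp_eq_id {X Y : 𝒞} {f : X ⟶ Y} {s : Y ⟶ X} (h : s ≫ f = 𝟙 Y) :
    IsRegEpi f := by
  have := IsSplitEpi.mk' ⟨s, h⟩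
  exact (isRegEpi_iff_isRegularEpi f).2 inferInstance

theorem regular_of_kernelPairsHaveCoequalisers_of_regEpisStable [HasFiniteLimits 𝒞]
    (hcoeq : KernelPairsHaveCoequalisers 𝒞) (hstab : RegEpisStable 𝒞) : Regular 𝒞 where
  hasCoequalizer_of_isKernelPair hk := by
    obtain ⟨Q, q, w, hq⟩ := hcoeq _ _ _ hk
    exact ⟨⟨⟨Cofork.ofπ q w, Cofork.IsColimit.ofExistsUnique fun s => hq s.π s.condition⟩⟩⟩
  regularEpiIsStableUnderBaseChange := ⟨fun sq hg => (isRegEpi_iff_isRegularEpi _).1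
    (hstab _ _ _ _ sq.flip ((isRegEpi_iff_isRegularEpi _).2 hg))⟩

def Rel.Mem (ρ : Rel 𝒞 X Y) {T : 𝒞} (x : T ⟶ X) (y : T ⟶ Y) : Prop :=
  ∃ r : T ⟶ ρ.R, r ≫ ρ.p1 = x ∧ r ≫ ρ.p2 = y

def Rel.IsDifunctional (ρ : Rel 𝒞 X Y) : Prop :=
  ∀ {T : 𝒞} {x x' : T ⟶ X} {y y' : T ⟶ Y}, ρ.Mem x y → ρ.Mem x' y → ρ.Mem x' y' → ρ.Mem x y'

namespace Rel

variable {T T' : 𝒞}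

theorem mem_p1_p2 (ρ : Rel 𝒞 X Y) : ρ.Mem ρ.p1 ρ.p2 :=
  ⟨𝟙 _, Category.id_comp _, Category.id_comp _⟩

theorem Mem.precomp {ρ : Rel 𝒞 X Y} {x : T ⟶ X} {y : T ⟶ Y} (h : ρ.Mem x y) (u : T' ⟶ T) :
    ρ.Mem (u ≫ x) (u ≫ y) :=
  let ⟨r, hr₁, hr₂⟩ := h
  ⟨u ≫ r, by rw [Category.assoc, hr₁], by rw [Category.assoc, hr₂]⟩

theorem IsReflexive.mem {ρ : Rel 𝒞 X X} (h : ρ.IsReflexive) (x : T ⟶ X) : ρ.Mem x x :=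
  let ⟨r, hr₁, hr₂⟩ := h
  ⟨x ≫ r, by rw [Category.assoc, hr₁, Category.comp_id],
    by rw [Category.assoc, hr₂, Category.comp_id]⟩

theorem IsTransitive.mem_trans [HasPullbacks 𝒞] {ρ : Rel 𝒞 X X} (h : ρ.IsTransitive)
    {x y z : T ⟶ X} (hxy : ρ.Mem x y) (hyz : ρ.Mem y z) : ρ.Mem x z := by
  obtain ⟨r₁, rfl, hy₁⟩ := hxy
  obtain ⟨r₂, hy₂, rfl⟩ := hyz
  obtain ⟨t, ht₁, ht₂⟩ := h
  exact ⟨pullback.lift r₁ r₂ (hy₁.trans hy₂.symm) ≫ t, by simp [ht₁], by simp [ht₂]⟩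

theorem IsDifunctional.isSymmetric {ρ : Rel 𝒞 X X} (hd : ρ.IsDifunctional)
    (hr : ρ.IsReflexive) : ρ.IsSymmetric :=
  hd (hr.mem ρ.p2) ρ.mem_p1_p2 (hr.mem ρ.p1)

theorem exists_preimage [HasBinaryProducts 𝒞] [HasPullbacks 𝒞] (ρ : Rel 𝒞 X Y) {P : 𝒞}
    (x : P ⟶ X) (y : P ⟶ Y) :
    ∃ (M : 𝒞) (m : M ⟶ P), Mono m ∧ ρ.Mem (m ≫ x) (m ≫ y) ∧
      ∀ {T : 𝒞} (h : T ⟶ P), ρ.Mem (h ≫ x) (h ≫ y) → ∃ k : T ⟶ M, k ≫ m = h := by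
  have : Mono (prod.lift ρ.p1 ρ.p2) :=
    ⟨fun a b h => ρ.jm a b (by simpa using h =≫ prod.fst) (by simpa using h =≫ prod.snd)⟩
  have hw := pullback.condition (f := prod.lift x y) (g := prod.lift ρ.p1 ρ.p2)
  refine ⟨_, pullback.fst _ _, inferInstance,
    ⟨pullback.snd _ _, by simpa using (hw =≫ prod.fst).symm, by simpa using (hw =≫ prod.snd).symm⟩,
    fun h ⟨r, hr₁, hr₂⟩ => ⟨pullback.lift h r (by ext <;> simp [hr₁, hr₂]), by simp⟩⟩

theorem isDifunctional_of_forall_isTransitive [HasBinaryProducts 𝒞] [HasPullbacks 𝒞]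
    (htrans : ∀ {Z : 𝒞} (σ : Rel 𝒞 Z Z), σ.IsReflexive → σ.IsTransitive) (ρ : Rel 𝒞 X Y) :
    ρ.IsDifunctional := by
  obtain ⟨M, m, _, hmem, hlift⟩ :=
    ρ.exists_preimage (prod.fst ≫ ρ.p1 : ρ.R ⨯ ρ.R ⟶ X) (prod.snd ≫ ρ.p2)
  let σ : Rel 𝒞 ρ.R ρ.R := ⟨M, m ≫ prod.fst, m ≫ prod.snd, fun a b h₁ h₂ => by
    rw [← cancel_mono m]
    ext <;> simpa using ‹_›⟩
  have mem_σ : ∀ {T : 𝒞} (u v : T ⟶ ρ.R), σ.Mem u v ↔ ρ.Mem (u ≫ ρ.p1) (v ≫ ρ.p2) := by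
    intro T u v
    constructor
    · rintro ⟨k, rfl, rfl⟩
      simpa [σ] using hmem.precomp k
    · intro huv
      obtain ⟨k, hk⟩ := hlift (prod.lift u v) (by simpa using huv)
      exact ⟨k, by simp [σ, reassoc_of% hk], by simp [σ, reassoc_of% hk]⟩
  have hσ : σ.IsTransitive := htrans σ ((mem_σ _ _).2 (by simpa using ρ.mem_p1_p2))
  intro T x x' y y' hxy hx'y hx'y'
  obtain ⟨r₁, rfl, rfl⟩ := hxy
  obtain ⟨r₂, rfl, hr₂⟩ := hx'y
  obtain ⟨r₃, hr₃, rfl⟩ := hx'y'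
  have h₁₂ : σ.Mem r₁ r₂ := (mem_σ _ _).2 ⟨r₁, rfl, hr₂.symm⟩
  have h₂₃ : σ.Mem r₂ r₃ := (mem_σ _ _).2 ⟨r₃, hr₃, rfl⟩
  exact (mem_σ _ _).1 (hσ.mem_trans h₁₂ h₂₃)

end Rel

theorem IsMaltsev.isDifunctional [HasBinaryProducts 𝒞] [HasPullbacks 𝒞] (hM : IsMaltsev 𝒞)
    (ρ : Rel 𝒞 X Y) : ρ.IsDifunctional :=
  Rel.isDifunctional_of_forall_isTransitive (fun σ hσ => (hM σ hσ).2.2) ρ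

theorem Rel.IsDifunctional.mem_of_split_square {A B E D T : 𝒞} {f : A ⟶ B} {s : B ⟶ A} {g : E ⟶ D}
    {t : D ⟶ E} {c : E ⟶ A} {d : D ⟶ B} (sec_g : t ≫ g = 𝟙 D) (comm1 : c ≫ f = g ≫ d)
    (comm2 : d ≫ s = t ≫ c) {ρ : Rel 𝒞 D A} (hρ : ρ.IsDifunctional) (hgc : ρ.Mem g c)
    (x : T ⟶ D) (e : T ⟶ E) (hxe : x ≫ d = e ≫ c ≫ f) : ρ.Mem x (e ≫ c) := by
  have h₁ : ρ.Mem x (x ≫ d ≫ s) := by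
    simpa [sec_g, comm2] using hgc.precomp (x ≫ t)
  have h₂ : ρ.Mem (e ≫ g) (x ≫ d ≫ s) := by
    have hc : e ≫ g ≫ t ≫ c = x ≫ d ≫ s := by
      rw [← comm2, ← reassoc_of% comm1, reassoc_of% hxe]
    simpa [sec_g, hc] using hgc.precomp (e ≫ g ≫ t)
  exact hρ h₁ h₂ (hgc.precomp e)

def Square1sAreRegularPushouts (𝒞 : Type u) [Category.{v} 𝒞] [HasPullbacks 𝒞] : Prop :=
  ∀ {A B E D : 𝒞} (f : A ⟶ B) (s : B ⟶ A) (g : E ⟶ D) (t : D ⟶ E) (c : E ⟶ A) (d : D ⟶ B)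
    (hsq : IsSquare1 f s g t c d), IsRegEpi (pullback.lift g c hsq.comm1.symm : E ⟶ pullback d f)

theorem IsMaltsev.square1sAreRegularPushouts [Regular 𝒞] (hM : IsMaltsev 𝒞) :
    Square1sAreRegularPushouts 𝒞 := by
  intro A B E D f s g t c d hsq
  have : IsRegularEpi c := (isRegEpi_iff_isRegularEpi c).1 hsq.regepi_c
  rw [isRegEpi_iff_isRegularEpi]
  suffices ExtremalEpi (pullback.lift g c hsq.comm1.symm : E ⟶ pullback d f) from inferInstance
  apply ExtremalEpi.mk_of_hasEqualizers
  intro Z p i hpi _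
  let ρ : Rel 𝒞 D A := ⟨Z, i ≫ pullback.fst d f, i ≫ pullback.snd d f, fun a b h₁ h₂ => by
    rw [← cancel_mono i]
    exact pullback.hom_ext (by simpa using h₁) (by simpa using h₂)⟩
  -- `π` is the cover of `D ×_B A` on which the second component factors through `c`
  let π := pullback.fst (pullback.snd d f) c
  have hπ : ρ.Mem (π ≫ pullback.fst d f) (pullback.snd (pullback.snd d f) c ≫ c) :=
    Rel.IsDifunctional.mem_of_split_square hsq.sec_g hsq.comm1 hsq.comm2
      (hM.isDifunctional ρ) ⟨p, by simp [ρ, reassoc_of% hpi], by simp [ρ, reassoc_of% hpi]⟩ _ _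
      (by simp [π, pullback.condition, ← pullback.condition_assoc])
  obtain ⟨r, hr₁, hr₂⟩ := hπ
  have hri : r ≫ i = π :=
    pullback.hom_ext (by simpa [ρ] using hr₁) (by simpa [ρ, π, pullback.condition] using hr₂)
  have : StrongEpi (r ≫ i) := by rw [hri]; infer_instance
  have : StrongEpi i := strongEpi_of_strongEpi r i
  exact isIso_of_mono_of_strongEpi i

theorem Square1sAreRegularPushouts.isIso_of_mono [HasPullbacks 𝒞]
    (h : Square1sAreRegularPushouts 𝒞) {A B D M : 𝒞} {f : A ⟶ B} {s : B ⟶ A}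
    (hs : s ≫ f = 𝟙 B) {d : D ⟶ B} {t : B ⟶ D} (ht : t ≫ d = 𝟙 B)
    (m : M ⟶ pullback d f) [Mono m] (k₁ : D ⟶ M)
    (hk₁ : k₁ ≫ m ≫ pullback.fst d f = 𝟙 D) (hk₁' : k₁ ≫ m ≫ pullback.snd d f = d ≫ s)
    (k₂ : A ⟶ M) (hk₂ : k₂ ≫ m ≫ pullback.snd d f = 𝟙 A) : IsIso m := by
  have hsq : IsSquare1 f s (m ≫ pullback.fst d f) k₁ (m ≫ pullback.snd d f) d :=
    { sec_f := hs
      sec_g := hk₁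
      regepi_c := isRegEpi_of_comp_eq_id hk₂
      regepi_d := isRegEpi_of_comp_eq_id ht
      comm1 := by simp [pullback.condition]
      comm2 := hk₁'.symm }
  have hm : pullback.lift (m ≫ pullback.fst d f) (m ≫ pullback.snd d f) hsq.comm1.symm = m :=
    pullback.hom_ext (by simp) (by simp)
  have : IsRegularEpi m := by
    rw [← isRegEpi_iff_isRegularEpi, ← hm]
    exact h f s _ k₁ _ d hsq
  exact isIso_of_mono_of_strongEpi m

theorem Square1sAreRegularPushouts.isTransitive [HasPullbacks 𝒞] [HasBinaryProducts 𝒞]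
    (h : Square1sAreRegularPushouts 𝒞) {ρ : Rel 𝒞 X X} (hρ : ρ.IsReflexive) :
    ρ.IsTransitive := by
  obtain ⟨r, hr₁, hr₂⟩ := hρ
  obtain ⟨M, m, _, hmem, hlift⟩ := ρ.exists_preimage
    (pullback.fst ρ.p2 ρ.p1 ≫ ρ.p1) (pullback.snd ρ.p2 ρ.p1 ≫ ρ.p2)
  obtain ⟨k₁, hk₁⟩ := hlift (pullback.lift (𝟙 ρ.R) (ρ.p2 ≫ r) (by simp [hr₁]))
    (by simpa [hr₂] using ρ.mem_p1_p2)
  obtain ⟨k₂, hk₂⟩ := hlift (pullback.lift (ρ.p1 ≫ r) (𝟙 ρ.R) (by simp [hr₂]))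
    (by simpa [hr₁] using ρ.mem_p1_p2)
  have : IsIso m := h.isIso_of_mono hr₁ hr₂ m k₁ (by simp [reassoc_of% hk₁])
    (by simp [reassoc_of% hk₁]) k₂ (by simp [reassoc_of% hk₂])
  show ρ.Mem _ _
  simpa using hmem.precomp (inv m)

theorem isMaltsev_of_square1sAreRegularPushouts [HasPullbacks 𝒞] [HasBinaryProducts 𝒞]
    (h : Square1sAreRegularPushouts 𝒞) : IsMaltsev 𝒞 := fun ρ hρ =>
  ⟨hρ, Rel.IsDifunctional.isSymmetric
    (Rel.isDifunctional_of_forall_isTransitive (fun _ => h.isTransitive) ρ) hρ,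
    h.isTransitive hρ⟩

/-- A regular category is a Mal'tsev category iff every square
of type (1) is a regular pushout, i.e. the comparison morphism
`⟨g,c⟩ : C → D ×_B A` is a regular epimorphism. -/
theorem statement13 [HasFiniteLimits 𝒞]
    (hcoeq : KernelPairsHaveCoequalisers 𝒞) (hstab : RegEpisStable 𝒞) :
    IsMaltsev 𝒞 ↔
      ∀ {A B E D : 𝒞} (f : A ⟶ B) (s : B ⟶ A) (g : E ⟶ D) (t : D ⟶ E)
        (c : E ⟶ A) (d : D ⟶ B) (hsq : IsSquare1 f s g t c d),
        IsRegEpi (pullback.lift g c hsq.comm1.symm : E ⟶ pullback d f) := by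
  have := regular_of_kernelPairsHaveCoequalisers_of_regEpisStable hcoeq hstab
  exact ⟨IsMaltsev.square1sAreRegularPushouts, isMaltsev_of_square1sAreRegularPushouts⟩

end Paper
end

section
/- In a multi-pointed category with kernels, every morphism f: X → Y admits a star-kernel, and it is given by Eq(f)* ⇉ X, the largest star subrelation of the kernel pair of f. -/
/-!
Restricting a relation `ρ` along an `N`-kernel of its first leg produces `ρ*`, and by the
universal property of that `N`-kernel every span through `ρ` whose first leg lies in `N`
factors through `ρ*`. For `ρ = Eq(f)`, a star `(t₁, t₂)` with `f·t₁ = f·t₂` is such a span,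
so `Eq(f)*` is the star-kernel of `f`.
-/

open CategoryTheory CategoryTheory.Limits

universe v u

namespace Paper

variable {𝒞 : Type u} [Category.{v} 𝒞]

variable {X Y Z : 𝒞}

variable {N : MorphismProperty 𝒞}

theorem IsNKernel.mono (hN : IsIdeal N) {X Y K : 𝒞} {f : X ⟶ Y} {n : K ⟶ X}
    (hn : IsNKernel N f n) : Mono n where
  right_cancellation a b hab := by
    have hN_an : N ((a ≫ n) ≫ f) := by
      simpa only [Category.assoc] using hN a (n ≫ f) (Or.inr hn.1)
    obtain ⟨u, -, huniq⟩ := hn.2 (a ≫ n) hN_an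
    exact (huniq a rfl).trans (huniq b hab.symm).symm

def Rel.restrict (ρ : Rel 𝒞 X Y) {K : 𝒞} (n : K ⟶ ρ.R) [Mono n] : Rel 𝒞 X Y where
  R := K
  p1 := n ≫ ρ.p1
  p2 := n ≫ ρ.p2
  jm a b h1 h2 := by
    rw [← cancel_mono n]
    exact ρ.jm _ _ (by simpa only [Category.assoc] using h1)
      (by simpa only [Category.assoc] using h2)

theorem isLargestStarSub_restrict {ρ : Rel 𝒞 X Y} {K : 𝒞} {n : K ⟶ ρ.R} [Mono n]
    (hn : IsNKernel N ρ.p1 n) : IsLargestStarSub N ρ (ρ.restrict n) := by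
  refine ⟨⟨n, rfl, rfl⟩, hn.1, fun σ ⟨j, hj1, hj2⟩ hσ => ?_⟩
  obtain ⟨u, hu, -⟩ := hn.2 j (hj1 ▸ hσ)
  exact ⟨u, by simp only [Rel.restrict, ← Category.assoc, hu, hj1],
    by simp only [Rel.restrict, ← Category.assoc, hu, hj2]⟩

theorem exists_isLargestStarSub (hN : IsIdeal N) (hker : HasNKernels N) (ρ : Rel 𝒞 X Y) :
    ∃ τ : Rel 𝒞 X Y, IsLargestStarSub N ρ τ := by
  obtain ⟨K, n, hn⟩ := hker ρ.p1
  have := hn.mono hN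
  exact ⟨ρ.restrict n, isLargestStarSub_restrict hn⟩

theorem IsLargestStarSub.exists_lift (hN : IsIdeal N) (hker : HasNKernels N)
    {ρ τ : Rel 𝒞 X Y} (hτ : IsLargestStarSub N ρ τ) {T : 𝒞} (m : T ⟶ ρ.R)
    (hm : N (m ≫ ρ.p1)) : ∃ u : T ⟶ τ.R, u ≫ τ.p1 = m ≫ ρ.p1 ∧ u ≫ τ.p2 = m ≫ ρ.p2 := by
  obtain ⟨K, n, hn⟩ := hker ρ.p1
  have := hn.mono hN
  have hρn := isLargestStarSub_restrict hn
  obtain ⟨k, hk1, hk2⟩ : ∃ k : K ⟶ τ.R, k ≫ τ.p1 = n ≫ ρ.p1 ∧ k ≫ τ.p2 = n ≫ ρ.p2 :=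
    hτ.2.2 _ hρn.1 hρn.2.1
  obtain ⟨u, hu, -⟩ := hn.2 m hm
  refine ⟨u ≫ k, ?_, ?_⟩
  · rw [Category.assoc, hk1, reassoc_of% hu]
  · rw [Category.assoc, hk2, reassoc_of% hu]

theorem isStarKernel_of_isLargestStarSub [HasPullbacks 𝒞] (hN : IsIdeal N)
    (hker : HasNKernels N) (f : X ⟶ Y) {τ : Rel 𝒞 X X}
    (hτ : IsLargestStarSub N (kerPairRel f) τ) : IsStarKernel N f τ.p1 τ.p2 := by
  obtain ⟨⟨j, hj1, hj2⟩, hNτ, -⟩ := id hτ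
  refine ⟨hNτ, ?_, fun t1 t2 ht1 ht => ?_⟩
  · rw [← hj1, ← hj2, Category.assoc, Category.assoc]
    exact congrArg (j ≫ ·) pullback.condition
  · obtain ⟨u, hu1, hu2⟩ := hτ.exists_lift hN hker (pullback.lift t1 t2 ht)
      (by simpa only [kerPairRel, pullback.lift_fst] using ht1)
    simp only [kerPairRel, pullback.lift_fst, pullback.lift_snd] at hu1 hu2
    exact ⟨u, ⟨hu1, hu2⟩, fun v ⟨hv1, hv2⟩ => τ.jm _ _ (hv1.trans hu1.symm) (hv2.trans hu2.symm)⟩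

/-- In a multi-pointed category with kernels, every morphism
admits a star-kernel, and it is given by `Eq(f)*`, the largest star subrelation of
the kernel pair of `f`. -/
theorem statement15 [HasFiniteLimits 𝒞]
    (N : MorphismProperty 𝒞) (hN : IsIdeal N) (hker : HasNKernels N)
    {X Y : 𝒞} (f : X ⟶ Y) :
    (∃ τ : Rel 𝒞 X X, IsLargestStarSub N (kerPairRel f) τ) ∧
    (∀ τ : Rel 𝒞 X X, IsLargestStarSub N (kerPairRel f) τ →
      IsStarKernel N f τ.p1 τ.p2) :=
  ⟨exists_isLargestStarSub hN hker _, fun _ hτ => isStarKernel_of_isLargestStarSub hN hker f hτ⟩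

end Paper
end
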